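/- Let (Y,X,Z) be finite random variables with joint distribution P, let κ = P_{Y|X}, d = P_{Y|Z}, π = P_X. Then the deficiency satisfies δ^π(d,κ) ≤ I(Y;X|Z). -/

import Mathlib

open scoped BigOperators
open Real

noncomputable section

variable {W X Y Z : Type*}

/-- A channel (row-stochastic conditional distribution) from `X` to `Y`. -/
def IsChannel [Fintype Y] (k : X → Y → ℝ) : Prop :=
  (∀ x y, 0 ≤ k x y) ∧ ∀ x, ∑ y, k x y = 1

/-- A probability distribution on a finite set. -/
def IsDist [Fintype X] (p : X → ℝ) : Prop :=
  (∀ x, 0 ≤ p x) ∧ ∑ x, p x = 1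

/-- Composition of a decoder `d : Z → Y` with an encoder `e : X → Z`:
`(d ∘ e)(y|x) = ∑ z d(y|z) e(z|x)`. -/
def chComp [Fintype Z] (d : Z → Y → ℝ) (e : X → Z → ℝ) : X → Y → ℝ :=
  fun x y => ∑ z, d z y * e x z

/-- Conditional KL divergence `D(k ‖ l | pi) = ∑_x pi x ∑_y k(y|x) log (k(y|x)/l(y|x))`. -/
def condKL [Fintype X] [Fintype Y] (pi : X → ℝ) (k l : X → Y → ℝ) : ℝ :=
  ∑ x, pi x * ∑ y, k x y * Real.log (k x y / l x y)

/-- Deficiency of a decoder `d` w.r.t. a channel `k`, weighted by `pi`: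
the infimum over encoders `e` of `D(k ‖ d∘e | pi)`. -/
def deficiency [Fintype X] [Fintype Y] [Fintype Z]
    (pi : X → ℝ) (d : Z → Y → ℝ) (k : X → Y → ℝ) : ℝ :=
  sInf {r : ℝ | ∃ e : X → Z → ℝ, IsChannel e ∧ r = condKL pi k (chComp d e)}

/-- A joint probability mass function for a triple `(Y, X, Z)`. -/
def IsPMF3 [Fintype X] [Fintype Y] [Fintype Z] (p : Y → X → Z → ℝ) : Prop :=
  (∀ y x z, 0 ≤ p y x z) ∧ ∑ y, ∑ x, ∑ z, p y x z = 1

def mYX [Fintype Z] (p : Y → X → Z → ℝ) : Y → X → ℝ := fun y x => ∑ z, p y x z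
def mYZ [Fintype X] (p : Y → X → Z → ℝ) : Y → Z → ℝ := fun y z => ∑ x, p y x z
def mXZ [Fintype Y] (p : Y → X → Z → ℝ) : X → Z → ℝ := fun x z => ∑ y, p y x z
def mX  [Fintype Y] [Fintype Z] (p : Y → X → Z → ℝ) : X → ℝ := fun x => ∑ y, ∑ z, p y x z
def mY  [Fintype X] [Fintype Z] (p : Y → X → Z → ℝ) : Y → ℝ := fun y => ∑ x, ∑ z, p y x z
def mZ  [Fintype X] [Fintype Y] (p : Y → X → Z → ℝ) : Z → ℝ := fun z => ∑ y, ∑ x, p y x z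

/-- Mutual information of a bivariate joint distribution (in nats). -/
def MI2 [Fintype X] [Fintype Y] (q : X → Y → ℝ) : ℝ :=
  ∑ x, ∑ y, q x y * Real.log (q x y / ((∑ y', q x y') * (∑ x', q x' y)))

/-- `I(Y; (X,Z))` for a joint triple distribution (in nats). -/
def MI_Y_XZ [Fintype X] [Fintype Y] [Fintype Z] (p : Y → X → Z → ℝ) : ℝ :=
  ∑ y, ∑ x, ∑ z, p y x z * Real.log (p y x z / (mY p y * mXZ p x z))

/-- Conditional mutual information `I(Y;X|Z)` (in nats). -/
def CMI_YX_gZ [Fintype X] [Fintype Y] [Fintype Z] (p : Y → X → Z → ℝ) : ℝ :=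
  ∑ y, ∑ x, ∑ z, p y x z * Real.log ((p y x z * mZ p z) / (mYZ p y z * mXZ p x z))

/-- Conditional mutual information `I(Y;Z|X)` (in nats). -/
def CMI_YZ_gX [Fintype X] [Fintype Y] [Fintype Z] (p : Y → X → Z → ℝ) : ℝ :=
  ∑ y, ∑ x, ∑ z, p y x z * Real.log ((p y x z * mX p x) / (mYX p y x * mXZ p x z))

/-- The set `Δ_P` of joint distributions matching `p` on the `(Y,X)`- and `(Y,Z)`-marginals. -/
def deltaP [Fintype X] [Fintype Y] [Fintype Z] (p : Y → X → Z → ℝ) : Set (Y → X → Z → ℝ) :=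
  {q | IsPMF3 q ∧ mYX q = mYX p ∧ mYZ q = mYZ p}

/-- Unique information `UI(Y; X ∖ Z) = inf_{Q ∈ Δ_P} I_Q(Y;X|Z)`. -/
def UIX [Fintype X] [Fintype Y] [Fintype Z] (p : Y → X → Z → ℝ) : ℝ :=
  sInf {r : ℝ | ∃ q ∈ deltaP p, r = CMI_YX_gZ q}

/-- Unique information `UI(Y; Z ∖ X) = inf_{Q ∈ Δ_P} I_Q(Y;Z|X)`. -/
def UIZ [Fintype X] [Fintype Y] [Fintype Z] (p : Y → X → Z → ℝ) : ℝ :=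
  sInf {r : ℝ | ∃ q ∈ deltaP p, r = CMI_YZ_gX q}

/-- Shannon entropy (in nats). -/
def entropy [Fintype X] (p : X → ℝ) : ℝ := ∑ x, -(p x * Real.log (p x))

end

/-!
Take the encoder `e = P_{Z|X}`. Then `(d ∘ e)(y|x) = ∑_z P(z|x) P(y|z)`, so
`π(x) κ(y|x) = ∑_z P(y,x,z)` and `π(x) (d ∘ e)(y|x) = ∑_z P(y,z) P(x,z) / P(z)`. The log-sum
inequality (convexity of `t ↦ t log t`) applied over `z` for each `(x, y)` bounds
`D(κ ‖ d ∘ e | π)` by `∑ P(y,x,z) log (P(y,x,z) P(z) / (P(y,z) P(x,z))) = I(Y;X|Z)`, and the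
deficiency is at most the value at this particular encoder.
-/

open Finset

namespace Real

theorem sum_mul_log_div_le {ι : Type*} {s : Finset ι} {a b : ι → ℝ}
    (ha : ∀ i ∈ s, 0 ≤ a i) (hb : ∀ i ∈ s, 0 ≤ b i) (hab : ∀ i ∈ s, 0 < a i → 0 < b i) :
    (∑ i ∈ s, a i) * log ((∑ i ∈ s, a i) / ∑ i ∈ s, b i) ≤ ∑ i ∈ s, a i * log (a i / b i) := by
  rcases (sum_nonneg hb).eq_or_lt with hB | hB
  · have hb0 : ∀ i ∈ s, b i = 0 := (sum_eq_zero_iff_of_nonneg hb).1 hB.symm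
    rw [← hB, div_zero, log_zero, mul_zero]
    exact sum_nonneg fun i hi => by simp [hb0 i hi]
  have hweight : ∀ i ∈ s, (b i / ∑ j ∈ s, b j) * (a i / b i) = a i / ∑ j ∈ s, b j := by
    intro i hi
    rcases (hb i hi).eq_or_lt with h | h
    · simp [← h, le_antisymm (not_lt.1 fun hai => (hab i hi hai).ne h) (ha i hi)]
    · field_simp
  -- Jensen for `x ↦ x log x` at the points `a i / b i` with weights `b i / ∑ b`
  have jensen := convexOn_mul_log.map_sum_le (t := s) (w := fun i => b i / ∑ j ∈ s, b j)
    (p := fun i => a i / b i) (fun i hi => div_nonneg (hb i hi) hB.le)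
    (by rw [← sum_div, div_self hB.ne']) (fun i hi => div_nonneg (ha i hi) (hb i hi))
  simp only [smul_eq_mul, ← mul_assoc] at jensen
  have hrhs : ∑ i ∈ s, (b i / ∑ j ∈ s, b j) * (a i / b i) * log (a i / b i) =
      (∑ i ∈ s, a i * log (a i / b i)) / ∑ j ∈ s, b j := by
    rw [sum_div]
    exact sum_congr rfl fun i hi => by rw [hweight i hi, div_mul_eq_mul_div]
  rwa [sum_congr rfl hweight, ← sum_div, hrhs, div_mul_eq_mul_div,
    div_le_div_iff_of_pos_right hB] at jensen

theorem neg_le_mul_log_div {a b : ℝ} (ha : 0 ≤ a) (hb : 0 ≤ b) : -b ≤ a * log (a / b) := by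
  rcases ha.eq_or_lt with rfl | ha
  · simpa using hb
  rcases hb.eq_or_lt with rfl | hb
  · simp
  have := mul_le_mul_of_nonneg_left (one_sub_inv_le_log_of_pos (div_pos ha hb)) ha.le
  rw [inv_div, mul_sub, mul_one, mul_div_cancel₀ _ ha.ne'] at this
  linarith

end Real

section Channels

variable {X Y Z : Type*} [Fintype Y]

theorem isChannel_div {q : X → Y → ℝ} {c : X → ℝ} (hq : ∀ x y, 0 ≤ q x y)
    (hsum : ∀ x, ∑ y, q x y = c x) (hc : ∀ x, 0 < c x) :
    IsChannel fun x y => q x y / c x :=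
  ⟨fun x y => div_nonneg (hq x y) (hc x).le,
    fun x => by rw [← sum_div, hsum, div_self (hc x).ne']⟩

theorem IsChannel.chComp [Fintype Z] {d : Z → Y → ℝ} {e : X → Z → ℝ} (hd : IsChannel d)
    (he : IsChannel e) : IsChannel (chComp d e) := by
  refine ⟨fun x y => sum_nonneg fun z _ => mul_nonneg (hd.1 z y) (he.1 x z), fun x => ?_⟩
  change ∑ y, ∑ z, d z y * e x z = 1
  rw [sum_comm]
  simp only [← sum_mul, hd.2, one_mul, he.2]

theorem neg_sum_le_condKL [Fintype X] {pi : X → ℝ} {k l : X → Y → ℝ} (hpi : ∀ x, 0 ≤ pi x)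
    (hk : ∀ x y, 0 ≤ k x y) (hl : ∀ x y, 0 ≤ l x y) :
    -∑ x, pi x * ∑ y, l x y ≤ condKL pi k l := by
  rw [← sum_neg_distrib]
  refine sum_le_sum fun x _ => ?_
  rw [← mul_neg, ← sum_neg_distrib]
  exact mul_le_mul_of_nonneg_left
    (sum_le_sum fun y _ => Real.neg_le_mul_log_div (hk x y) (hl x y)) (hpi x)

-- Under `log 0 = 0` a conditional KL divergence can be negative; `neg_sum_le_condKL` is what
-- bounds the infimum defining `deficiency` from below.
theorem deficiency_le_condKL [Fintype X] [Fintype Z] {pi : X → ℝ} {d : Z → Y → ℝ} {k : X → Y → ℝ}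
    {e : X → Z → ℝ} (hpi : ∀ x, 0 ≤ pi x) (hk : ∀ x y, 0 ≤ k x y) (hd : IsChannel d)
    (he : IsChannel e) :
    deficiency pi d k ≤ condKL pi k (chComp d e) := by
  refine csInf_le ⟨-∑ x, pi x, ?_⟩ ⟨e, he, rfl⟩
  rintro _ ⟨e', he', rfl⟩
  simpa [(hd.chComp he').2] using neg_sum_le_condKL hpi hk (hd.chComp he').1

theorem condKL_div_div [Fintype X] {pi : X → ℝ} (hpi : ∀ x, pi x ≠ 0) (a b : X → Y → ℝ) :
    condKL pi (fun x y => a x y / pi x) (fun x y => b x y / pi x) =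
      ∑ x, ∑ y, a x y * Real.log (a x y / b x y) := by
  refine sum_congr rfl fun x _ => ?_
  rw [mul_sum]
  refine sum_congr rfl fun y _ => ?_
  rw [div_div_div_cancel_right₀ (hpi x), ← mul_assoc, mul_div_cancel₀ _ (hpi x)]

end Channels

section Marginals

variable {X Y Z : Type*} {p : Y → X → Z → ℝ}

theorem sum_mXZ [Fintype Y] [Fintype Z] (x : X) : ∑ z, mXZ p x z = mX p x :=
  sum_comm

theorem mYX_nonneg [Fintype Z] (hp : ∀ y x z, 0 ≤ p y x z) (y : Y) (x : X) : 0 ≤ mYX p y x :=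
  sum_nonneg fun z _ => hp y x z

theorem mYZ_nonneg [Fintype X] (hp : ∀ y x z, 0 ≤ p y x z) (y : Y) (z : Z) : 0 ≤ mYZ p y z :=
  sum_nonneg fun x _ => hp y x z

theorem mXZ_nonneg [Fintype Y] (hp : ∀ y x z, 0 ≤ p y x z) (x : X) (z : Z) : 0 ≤ mXZ p x z :=
  sum_nonneg fun y _ => hp y x z

theorem le_mYZ [Fintype X] (hp : ∀ y x z, 0 ≤ p y x z) (y : Y) (x : X) (z : Z) :
    p y x z ≤ mYZ p y z :=
  single_le_sum (fun x' _ => hp y x' z) (mem_univ x)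

theorem le_mXZ [Fintype Y] (hp : ∀ y x z, 0 ≤ p y x z) (y : Y) (x : X) (z : Z) :
    p y x z ≤ mXZ p x z :=
  single_le_sum (fun y' _ => hp y' x z) (mem_univ y)

theorem chComp_condDist_eq [Fintype X] [Fintype Y] [Fintype Z] :
    chComp (fun z y => mYZ p y z / mZ p z) (fun x z => mXZ p x z / mX p x) =
      fun x y => (∑ z, mYZ p y z * mXZ p x z / mZ p z) / mX p x := by
  ext x y
  rw [chComp, sum_div]
  exact sum_congr rfl fun z _ => by ring

theorem CMI_YX_gZ_eq [Fintype X] [Fintype Y] [Fintype Z] :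
    CMI_YX_gZ p = ∑ x, ∑ y, ∑ z,
      p y x z * Real.log (p y x z / (mYZ p y z * mXZ p x z / mZ p z)) := by
  rw [CMI_YX_gZ, sum_comm]
  simp only [div_div_eq_mul_div]

end Marginals

/-- for `k = P_{Y|X}`, `d = P_{Y|Z}`, `pi = P_X` induced by a joint
distribution `p` of `(Y,X,Z)`, the deficiency satisfies `δ^π(d,k) ≤ I(Y;X|Z)`. -/
theorem deficiency_le_CMI
    {X Y Z : Type*} [Fintype X] [Fintype Y] [Fintype Z]
    (p : Y → X → Z → ℝ) (hp : IsPMF3 p)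
    (hX : ∀ x, 0 < mX p x) (hZ : ∀ z, 0 < mZ p z) :
    deficiency (mX p) (fun z y => mYZ p y z / mZ p z) (fun x y => mYX p y x / mX p x)
      ≤ CMI_YX_gZ p := by
  obtain ⟨hnn, -⟩ := hp
  have hd : IsChannel fun z y => mYZ p y z / mZ p z :=
    isChannel_div (fun z y => mYZ_nonneg hnn y z) (fun z => rfl) hZ
  have he : IsChannel fun x z => mXZ p x z / mX p x :=
    isChannel_div (fun x z => mXZ_nonneg hnn x z) sum_mXZ hX
  calc _ ≤ condKL (mX p) (fun x y => mYX p y x / mX p x) (chComp _ _) :=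
        deficiency_le_condKL (fun x => (hX x).le)
          (fun x y => div_nonneg (mYX_nonneg hnn y x) (hX x).le) hd he
    _ = ∑ x, ∑ y, mYX p y x * Real.log (mYX p y x / ∑ z, mYZ p y z * mXZ p x z / mZ p z) := by
        rw [chComp_condDist_eq, condKL_div_div fun x => (hX x).ne']
    _ ≤ _ := sum_le_sum fun x _ => sum_le_sum fun y _ =>
        Real.sum_mul_log_div_le (fun z _ => hnn y x z)
          (fun z _ => div_nonneg (mul_nonneg (mYZ_nonneg hnn y z) (mXZ_nonneg hnn x z)) (hZ z).le)
          fun z _ hpos => div_pos (mul_pos (hpos.trans_le (le_mYZ hnn y x z))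
            (hpos.trans_le (le_mXZ hnn y x z))) (hZ z)
    _ = CMI_YX_gZ p := CMI_YX_gZ_eq.symm
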